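/- An inverse system of abelian groups (A_n, r_{m,n}) indexed by ℕ satisfying the Mittag-Leffler condition (for each n, the images r_{m,n}(A_m) ⊆ A_n stabilize for m large) has vanishing derived inverse limit: lim¹ A_n = 0. -/
import Mathlib


/-- An inverse system of abelian groups `(A n)` indexed by `ℕ`, with one-step transition
maps `r n : A (n+1) →+ A n` and composite transition maps `R m n : A m →+ A n` for
`n ≤ m`, satisfying the Mittag-Leffler condition (for each `n`, the images
`R m n (A m) ⊆ A n` stabilize for large `m`) has vanishing derived inverse limit:
`lim¹ A = 0`, i.e. the map `∏ A n → ∏ A n`, `(aₙ) ↦ (aₙ − r n (a_{n+1}))`, is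
surjective. -/
theorem stmt13 (A : ℕ → Type) [∀ n, AddCommGroup (A n)]
    (r : ∀ n : ℕ, A (n + 1) →+ A n)
    (R : ∀ m n : ℕ, n ≤ m → (A m →+ A n))
    (hRrefl : ∀ n : ℕ, R n n le_rfl = AddMonoidHom.id (A n))
    (hRsucc : ∀ n : ℕ, R (n + 1) n (Nat.le_succ n) = r n)
    (hRcomp : ∀ (k m n : ℕ) (hkm : m ≤ k) (hmn : n ≤ m),
      (R m n hmn).comp (R k m hkm) = R k n (hmn.trans hkm))
    (hML : ∀ n : ℕ, ∃ M : ℕ, ∃ hM : n ≤ M, ∀ (m : ℕ) (hm : M ≤ m),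
      (R m n (hM.trans hm)).range = (R M n hM).range) :
    ∀ b : ∀ n, A n, ∃ a : ∀ n, A n, ∀ n, b n = a n - r n (a (n + 1)) := by
  classical
  intro b
  choose M hMle hMeq using hML
  -- composite of r with R
  have hcomm : ∀ (k n : ℕ) (h : n + 1 ≤ k) (x : A k),
      r n (R k (n+1) h x) = R k n ((Nat.le_succ n).trans h) x := by
    intro k n h x
    rw [← hRsucc n]
    have := congrArg (fun f : A k →+ A n => f x) (hRcomp k (n+1) n h (Nat.le_succ n))
    simpa using this
  -- a monotone bound function
  set f : ℕ → ℕ := fun n => max ((Finset.range (n+1)).sup M) (n+1) with hf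
  have hf1 : ∀ n, n + 1 ≤ f n := fun n => le_max_right _ _
  have hf2 : ∀ n, M n ≤ f n := fun n =>
    le_trans (Finset.le_sup (Finset.mem_range.2 (Nat.lt_succ_self n))) (le_max_left _ _)
  have hfmono : ∀ n, f n ≤ f (n+1) := by
    intro n
    apply max_le
    · exact le_trans (Finset.sup_mono (Finset.range_subset_range.2 (Nat.le_succ _))) (le_max_left _ _)
    · exact le_trans (Nat.le_succ _) (le_max_right _ _)
  -- total transition maps
  set R' : ∀ m n : ℕ, A m → A n := fun m n x => if h : n ≤ m then R m n h x else 0 with hR'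
  have hR'def : ∀ (m n : ℕ) (h : n ≤ m) (x : A m), R' m n x = R m n h x := by
    intro m n h x; simp [hR', h]
  set a' : ∀ n, A n := fun n => ∑ k ∈ Finset.Ico n (f n), R' k n (b k) with ha'
  set c : ∀ n, A n := fun n => ∑ k ∈ Finset.Ico (f n) (f (n+1)), R' k n (b k) with hc'
  -- the key telescoping computation
  have hkey : ∀ n, a' n - r n (a' (n+1)) = b n - c n := by
    intro n
    have h1 : r n (a' (n+1)) = ∑ k ∈ Finset.Ico (n+1) (f (n+1)), R' k n (b k) := by
      rw [ha', map_sum]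
      apply Finset.sum_congr rfl
      intro k hk
      have hk' : n + 1 ≤ k := (Finset.mem_Ico.1 hk).1
      rw [hR'def k (n+1) hk', hcomm k n hk', hR'def k n ((Nat.le_succ n).trans hk')]
    have h2 : a' n = b n + ∑ k ∈ Finset.Ico (n+1) (f n), R' k n (b k) := by
      show (∑ k ∈ Finset.Ico n (f n), R' k n (b k)) = _
      rw [Finset.sum_eq_sum_Ico_succ_bot (Nat.lt_of_lt_of_le (Nat.lt_succ_self n) (hf1 n))]
      congr 1
      rw [hR'def n n le_rfl, hRrefl n]
      rfl
    have h3 : (∑ k ∈ Finset.Ico (n+1) (f n), R' k n (b k)) + c n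
        = ∑ k ∈ Finset.Ico (n+1) (f (n+1)), R' k n (b k) := by
      show _ + (∑ k ∈ Finset.Ico (f n) (f (n+1)), R' k n (b k)) = _
      exact Finset.sum_Ico_consecutive _ (hf1 n) (hfmono n)
    rw [h1, h2, ← h3]
    abel
  -- stable images
  set B : ∀ n, AddSubgroup (A n) := fun n => (R (M n) n (hMle n)).range with hB
  have hBr : ∀ (n m : ℕ) (hm : M n ≤ m), (R m n ((hMle n).trans hm)).range = B n := by
    intro n m hm; exact hMeq n m hm
  have hcB : ∀ n, c n ∈ B n := by
    intro n
    apply AddSubgroup.sum_mem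
    intro k hk
    have hk1 : M n ≤ k := le_trans (hf2 n) (Finset.mem_Ico.1 hk).1
    rw [hR'def k n ((hMle n).trans hk1)]
    rw [← hBr n k hk1]
    exact ⟨b k, rfl⟩
  -- surjectivity of r on stable images
  have hsurj : ∀ (n : ℕ) (x : A n), x ∈ B n → ∃ y, y ∈ B (n+1) ∧ r n y = x := by
    intro n x hx
    set m : ℕ := max (M n) (M (n+1)) with hm
    have h1 : M n ≤ m := le_max_left _ _
    have h2 : M (n+1) ≤ m := le_max_right _ _
    rw [← hBr n m h1] at hx
    obtain ⟨z, hz⟩ := hx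
    refine ⟨R m (n+1) ((hMle (n+1)).trans h2) z, ?_, ?_⟩
    · rw [← hBr (n+1) m h2]; exact ⟨z, rfl⟩
    · rw [hcomm m n ((hMle (n+1)).trans h2) z]
      exact hz
  choose g hg1 hg2 using hsurj
  -- build the correction sequence recursively
  obtain ⟨d, hdB, hdrec⟩ :
      ∃ d : ∀ n, A n, (∀ n, d n ∈ B n) ∧ ∀ n, r n (d (n+1)) = d n - c n := by
    let D : ∀ n, {x : A n // x ∈ B n} :=
      fun n => Nat.rec ⟨0, (B 0).zero_mem⟩
        (fun n p => ⟨g n (p.1 - c n) (sub_mem p.2 (hcB n)),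
          hg1 n (p.1 - c n) (sub_mem p.2 (hcB n))⟩) n
    exact ⟨fun n => (D n).1, fun n => (D n).2,
      fun n => hg2 n ((D n).1 - c n) (sub_mem (D n).2 (hcB n))⟩
  -- assemble
  refine ⟨fun n => a' n + d n, fun n => ?_⟩
  have := hkey n
  rw [map_add, hdrec n]
  have h := hkey n
  abel_nf
  abel_nf at h
  linear_combination (norm := abel) -h
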